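/- arXiv:2210.02233 — 3 statements merged into one kernel-verified Lean document; each statement's English description precedes it below -/
import Mathlib

section
/- Let R ⊆ ℕ be a good set and α an irrational real number. Suppose ρ ∈ L¹(μ_{R,α}) is nonnegative with ∫ ρ dμ_{R,α} = 1 and ρ is unbounded, i.e. ρ ∉ L^∞(μ_{R,α}), and suppose the good set S ⊆ R satisfies μ_{S,α} = ρ·μ_{R,α}. Then S has zero relative mean in R: M_R(S) = 0 (equivalently, its relative upper density ‖S‖_{1,R} is 0). -/
open MeasureTheory Filter Topology
open scoped BigOperators

noncomputable section

open Classical in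
/-- `S(N) = S ∩ {1,…,N}` as a `Finset`. -/
def initSeg (S : Set ℕ) (N : ℕ) : Finset ℕ := (Finset.Icc 1 N).filter (· ∈ S)

/-- The average `(1/#S(N)) ∑_{s ∈ S(N)} f (sα mod 1)`. -/
def empAvg (S : Set ℕ) (α : ℝ) (N : ℕ) (f : UnitAddCircle → ℝ) : ℝ :=
  ((initSeg S N).card : ℝ)⁻¹ * ∑ s ∈ initSeg S N, f (((s : ℝ) * α : ℝ) : UnitAddCircle)

/-- `μ` is the weak limit of the empirical measures `(1/#S(N)) ∑_{s ∈ S(N)} δ_{sα mod 1}`. -/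
def IsLimitMeasure (S : Set ℕ) (α : ℝ) (μ : Measure UnitAddCircle) : Prop :=
  ∀ f : C(UnitAddCircle, ℝ),
    Tendsto (fun N => empAvg S α N (fun x => f x)) atTop (𝓝 (∫ x, f x ∂μ))

/-- A good set: infinite, and for every `α` the empirical measures converge weakly
to some (probability) limit measure `μ_{S,α}`. -/
def IsGoodSet (S : Set ℕ) : Prop :=
  S.Infinite ∧ ∀ α : ℝ, ∃ μ : Measure UnitAddCircle, IsProbabilityMeasure μ ∧ IsLimitMeasure S α μ

/-- `R` is sublacunary: `log N / #R(N) → 0`. -/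
def Sublacunary (R : Set ℕ) : Prop :=
  Tendsto (fun N : ℕ => Real.log N / ((initSeg R N).card : ℝ)) atTop (𝓝 0)

open Classical in
/-- `#{n < N : r_n ∈ S}` where `(r_n)` is the increasing (0-indexed) enumeration of `R`. -/
def relCount (R S : Set ℕ) (N : ℕ) : ℕ :=
  ((Finset.range N).filter (fun n => Nat.nth (· ∈ R) n ∈ S)).card

/-- Weighted average `(1/∑_{n<N} w n) ∑_{n<N} w n · f (r_n β mod 1)`. -/
def wAvg (R : Set ℕ) (w : ℕ → ℝ) (β : ℝ) (N : ℕ) (f : UnitAddCircle → ℝ) : ℝ :=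
  (∑ n ∈ Finset.range N, w n)⁻¹ *
    ∑ n ∈ Finset.range N, w n * f (((Nat.nth (· ∈ R) n : ℝ) * β : ℝ) : UnitAddCircle)

/-- `μ` is the weak limit of the `w`-weighted empirical measures along `R` at `β`. -/
def IsWeightLimit (R : Set ℕ) (w : ℕ → ℝ) (β : ℝ) (μ : Measure UnitAddCircle) : Prop :=
  ∀ f : C(UnitAddCircle, ℝ),
    Tendsto (fun N => wAvg R w β N (fun x => f x)) atTop (𝓝 (∫ x, f x ∂μ))

/-- A good weight on `R` (indexed by the increasing enumeration of `R`). -/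
def IsGoodWeight (R : Set ℕ) (w : ℕ → ℝ) : Prop :=
  (∀ n, 0 ≤ w n) ∧ ¬ Summable w ∧
    ∀ β : ℝ, ∃ μ : Measure UnitAddCircle, IsProbabilityMeasure μ ∧ IsWeightLimit R w β μ

/-- Besicovitch-type seminorm `‖f‖₁ = limsup_N (1/N) ∑_{n<N} |f n|`. -/
def besic (f : ℕ → ℝ) : ℝ := Filter.limsup (fun N => (∑ n ∈ Finset.range N, |f n|) / N) atTop

/-- An integrable weight: approximable in `‖·‖₁` by bounded good weights. -/
def IntegrableWeight (R : Set ℕ) (w : ℕ → ℝ) : Prop :=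
  ∀ ε > 0, ∃ v : ℕ → ℝ, IsGoodWeight R v ∧ (∃ C, ∀ n, v n ≤ C) ∧
    besic (fun n => v n - w n) < ε

/-- Total variation distance between two finite Borel measures on the torus. -/
def varDist (μ ν : Measure UnitAddCircle) : ℝ :=
  ⨆ B : Set UnitAddCircle, ⨆ _ : MeasurableSet B, |(μ B).toReal - (ν B).toReal|

/-- `e(θ) = exp(2πiθ)`. -/
def eC (θ : ℝ) : ℂ := Complex.exp (2 * Real.pi * Complex.I * θ)

/-- `w(R(N)) = ∑_{r ∈ R(N)} w r`. -/
def wSum (R : Set ℕ) (w : ℕ → ℝ) (N : ℕ) : ℝ := ∑ r ∈ initSeg R N, w r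

/-- `μ` is the weak limit of `(1/w(R(N))) ∑_{r ∈ R(N)} w r · δ_{rβ mod 1}`. -/
def IsWeightLimitR (R : Set ℕ) (w : ℕ → ℝ) (β : ℝ) (μ : Measure UnitAddCircle) : Prop :=
  ∀ f : C(UnitAddCircle, ℝ),
    Tendsto
      (fun N => (wSum R w N)⁻¹ * ∑ r ∈ initSeg R N, w r * f (((r : ℝ) * β : ℝ) : UnitAddCircle))
      atTop (𝓝 (∫ x, f x ∂μ))

/-- `f : ℕ → ℂ` has mean `c`. -/
def HasMean (f : ℕ → ℂ) (c : ℂ) : Prop :=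
  Tendsto (fun N => (∑ n ∈ Finset.range N, f n) / (N : ℂ)) atTop (𝓝 c)

/-- The seminorm `‖f‖_M = limsup_N |(1/N) ∑_{n<N} f n|`. -/
def meanSeminorm (f : ℕ → ℂ) : ℝ :=
  Filter.limsup (fun N => ‖(∑ n ∈ Finset.range N, f n) / (N : ℂ)‖) atTop

end

/-! Writing `r_N` for the `N`-th element of `R`, `relCount R S (N + 1) / (N + 1)` is at most
`#S(r_N) / #R(r_N) + 1 / (N + 1)`, so it suffices that `#S(M) / #R(M) → 0`. Otherwise
`#S(M) ≥ c · #R(M)` for some `c > 0` and infinitely many `M`. As `S ⊆ R`, along those `M` the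
empirical averages of a continuous `f ≥ 0` satisfy `c · avg_S f ≤ avg_R f`, so in the limit
`c ∫ f ρ dμ ≤ ∫ f dμ`. Testing against continuous approximations of indicators of closed sets
gives `ρ μ ≤ c⁻¹ μ` as measures, i.e. `ρ ≤ c⁻¹` almost everywhere, contradicting the
unboundedness of `ρ`. -/

open scoped NNReal ENNReal BoundedContinuousFunction

section Comparison

variable {X : Type*} [PseudoEMetricSpace X] [MeasurableSpace X] {μ ν : Measure X}
  [IsFiniteMeasure μ] [IsFiniteMeasure ν] {C : ℝ≥0}

theorem measureReal_le_mul_of_forall_integral_le [OpensMeasurableSpace X]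
    (h : ∀ f : X →ᵇ ℝ≥0, ∫ x, (f x : ℝ) ∂ν ≤ C * ∫ x, (f x : ℝ) ∂μ)
    {F : Set X} (hF : IsClosed F) : ν.real F ≤ C * μ.real F := by
  have hδ : ∀ n : ℕ, (0 : ℝ) < 1 / (n + 1) := fun _ => Nat.one_div_pos_of_nat
  exact le_of_tendsto_of_tendsto'
    (tendsto_integral_thickenedIndicator_of_isClosed ν hF hδ
      tendsto_one_div_add_atTop_nhds_zero_nat)
    ((tendsto_integral_thickenedIndicator_of_isClosed μ hF hδ
      tendsto_one_div_add_atTop_nhds_zero_nat).const_mul _)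
    fun _ => h _

theorem Measure.le_smul_of_forall_integral_le [BorelSpace X]
    (h : ∀ f : X →ᵇ ℝ≥0, ∫ x, (f x : ℝ) ∂ν ≤ C * ∫ x, (f x : ℝ) ∂μ) : ν ≤ C • μ := by
  refine Measure.le_iff.2 fun B hB => ?_
  rw [hB.measure_eq_iSup_isClosed_of_ne_top (measure_ne_top ν B)]
  refine iSup₂_le fun K hKB => iSup_le fun hK => ?_
  calc ν K ≤ (C • μ) K := by
        rw [← ENNReal.toReal_le_toReal (measure_ne_top _ _) (measure_ne_top _ _)]
        simpa only [measureReal_def, Measure.smul_apply, ENNReal.toReal_smul, NNReal.smul_def,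
          smul_eq_mul] using measureReal_le_mul_of_forall_integral_le h hK
    _ ≤ (C • μ) B := measure_mono hKB

end Comparison

section Density

variable {X : Type*} [MeasurableSpace X] {μ : Measure X} [SigmaFinite μ]

theorem ae_le_of_withDensity_le_smul {f : X → ℝ≥0∞} (hf : AEMeasurable f μ) {c : ℝ≥0∞}
    (h : μ.withDensity f ≤ c • μ) : ∀ᵐ x ∂μ, f x ≤ c :=
  ae_le_of_forall_setLIntegral_le_of_sigmaFinite₀ hf fun s hs _ => by
    simpa [← withDensity_apply _ hs, setLIntegral_const, mul_comm] using h s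

theorem memLp_top_of_withDensity_le_smul {ρ : X → ℝ} (hρ0 : 0 ≤ ρ)
    (hρ : AEStronglyMeasurable ρ μ) {C : ℝ≥0}
    (h : μ.withDensity (fun x => ENNReal.ofReal (ρ x)) ≤ C • μ) : MemLp ρ ⊤ μ := by
  refine memLp_top_of_bound hρ C ?_
  filter_upwards [ae_le_of_withDensity_le_smul hρ.aemeasurable.ennreal_ofReal h] with x hx
  rw [Real.norm_of_nonneg (hρ0 x)]
  simpa using (ENNReal.ofReal_le_iff_le_toReal ENNReal.coe_ne_top).1 hx

end Density

section EmpiricalAverages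

variable {S R : Set ℕ} {α : ℝ} {μ ν : Measure UnitAddCircle}

lemma initSeg_mono (hSR : S ⊆ R) (N : ℕ) : initSeg S N ⊆ initSeg R N := by
  intro x hx
  simp only [initSeg, Finset.mem_filter] at hx ⊢
  exact ⟨hx.1, hSR hx.2⟩

lemma card_initSeg_mul_empAvg (S : Set ℕ) (α : ℝ) (N : ℕ) (f : UnitAddCircle → ℝ) :
    ((initSeg S N).card : ℝ) * empAvg S α N f
      = ∑ s ∈ initSeg S N, f (((s : ℝ) * α : ℝ) : UnitAddCircle) := by
  rcases (initSeg S N).eq_empty_or_nonempty with h | h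
  · simp [h]
  · exact mul_inv_cancel_left₀ (by simpa using h.card_pos.ne') _

lemma card_div_card_mul_empAvg_le (hSR : S ⊆ R) (α : ℝ) (N : ℕ)
    {f : UnitAddCircle → ℝ} (hf : 0 ≤ f) :
    ((initSeg S N).card : ℝ) / (initSeg R N).card * empAvg S α N f ≤ empAvg R α N f := by
  rw [div_mul_eq_mul_div, card_initSeg_mul_empAvg, empAvg, inv_mul_eq_div]
  gcongr
  · exact fun _ _ _ => hf _
  · exact initSeg_mono hSR N

lemma IsLimitMeasure.isProbabilityMeasure (hμ : IsLimitMeasure R α μ) (hR : R.Infinite) :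
    IsProbabilityMeasure μ := by
  have hone : (fun N => empAvg R α N (fun _ => 1)) =ᶠ[atTop] fun _ => 1 := by
    obtain ⟨r, hr, hr0⟩ := hR.exists_gt 0
    filter_upwards [eventually_ge_atTop r] with N hN
    have : r ∈ initSeg R N := by simp [initSeg, hr, hN, Nat.one_le_iff_ne_zero, hr0.ne']
    simp [empAvg, Finset.card_ne_zero_of_mem this]
  have := tendsto_nhds_unique (hμ (ContinuousMap.const _ 1)) (tendsto_const_nhds.congr' hone.symm)
  simp only [ContinuousMap.const_apply, integral_const, smul_eq_mul, mul_one] at this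
  exact ⟨by rwa [← ENNReal.toReal_eq_one_iff]⟩

lemma IsLimitMeasure.mul_integral_le_of_frequently (hν : IsLimitMeasure S α ν)
    (hμ : IsLimitMeasure R α μ) (hSR : S ⊆ R) {c : ℝ}
    (hc : ∃ᶠ N in atTop, c ≤ ((initSeg S N).card : ℝ) / (initSeg R N).card)
    (f : C(UnitAddCircle, ℝ)) (hf : 0 ≤ f) : c * ∫ x, f x ∂ν ≤ ∫ x, f x ∂μ := by
  set l := atTop ⊓ 𝓟 {N : ℕ | c ≤ ((initSeg S N).card : ℝ) / (initSeg R N).card}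
  have : l.NeBot := frequently_iff_neBot.1 hc
  have hl : l ≤ atTop := inf_le_left
  refine le_of_tendsto_of_tendsto (((hν f).mono_left hl).const_mul c) ((hμ f).mono_left hl)
    (eventually_inf_principal.2 (.of_forall fun N hN => ?_))
  have hS : 0 ≤ empAvg S α N (fun x => f x) :=
    mul_nonneg (by positivity) (Finset.sum_nonneg fun _ _ => hf _)
  exact (mul_le_mul_of_nonneg_right hN hS).trans (card_div_card_mul_empAvg_le hSR α N hf)

end EmpiricalAverages

section Counting

open Classical

/-- `initSeg S M` omits `0`, which `Nat.count` does see. -/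
lemma count_succ_le_card_initSeg_add_one (S : Set ℕ) (M : ℕ) :
    Nat.count (· ∈ S) (M + 1) ≤ (initSeg S M).card + 1 := by
  rw [Nat.count_eq_card_filter_range]
  refine (Finset.card_le_card fun x hx => ?_).trans (Finset.card_insert_le 0 _)
  simp only [Finset.mem_filter, Finset.mem_range] at hx
  rcases Nat.eq_zero_or_pos x with rfl | hx0
  · exact Finset.mem_insert_self _ _
  · refine Finset.mem_insert_of_mem ?_
    simp only [initSeg, Finset.mem_filter, Finset.mem_Icc]
    exact ⟨⟨hx0, by omega⟩, hx.2⟩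

lemma card_initSeg_le_count_succ (S : Set ℕ) (M : ℕ) :
    (initSeg S M).card ≤ Nat.count (· ∈ S) (M + 1) := by
  rw [Nat.count_eq_card_filter_range]
  refine Finset.card_le_card fun x hx => ?_
  simp only [initSeg, Finset.mem_filter, Finset.mem_Icc, Finset.mem_range] at hx ⊢
  exact ⟨by omega, hx.2⟩

lemma relCount_succ_le_count {R : Set ℕ} (hR : R.Infinite) (S : Set ℕ) (N : ℕ) :
    relCount R S (N + 1) ≤ Nat.count (· ∈ S) (Nat.nth (· ∈ R) N + 1) := by
  rw [relCount, Nat.count_eq_card_filter_range]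
  refine Finset.card_le_card_of_injOn (Nat.nth (· ∈ R)) (fun n hn => ?_)
    (Nat.nth_injective hR).injOn
  simp only [Finset.coe_filter, Finset.mem_range, Set.mem_ofPred_eq] at hn ⊢
  exact ⟨Nat.lt_succ_of_le ((Nat.nth_le_nth hR).2 (Nat.le_of_lt_succ hn.1)), hn.2⟩

theorem tendsto_relCount_div_of_tendsto_card_div {R S : Set ℕ} (hR : R.Infinite) (hSR : S ⊆ R)
    (h : Tendsto (fun M => ((initSeg S M).card : ℝ) / (initSeg R M).card) atTop (𝓝 0)) :
    Tendsto (fun N => (relCount R S N : ℝ) / N) atTop (𝓝 0) := by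
  rw [← tendsto_add_atTop_iff_nat 1]
  set M : ℕ → ℕ := Nat.nth (· ∈ R)
  have hM : Tendsto M atTop atTop := (Nat.nth_strictMono hR).tendsto_atTop
  have hlim : Tendsto (fun N : ℕ => ((initSeg S (M N)).card : ℝ) / (initSeg R (M N)).card
      + 1 / ((N : ℝ) + 1)) atTop (𝓝 0) := by
    simpa using (h.comp hM).add tendsto_one_div_add_atTop_nhds_zero_nat
  refine squeeze_zero (fun N => by positivity) (fun N => ?_) hlim
  have hS : relCount R S (N + 1) ≤ (initSeg S (M N)).card + 1 :=
    (relCount_succ_le_count hR S N).trans (count_succ_le_card_initSeg_add_one S (M N))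
  have hR : (initSeg R (M N)).card ≤ N + 1 :=
    (card_initSeg_le_count_succ R (M N)).trans
      (Nat.count_nth_succ_of_infinite (p := (· ∈ R)) hR N).le
  have hdiv : ((initSeg S (M N)).card : ℝ) / (N + 1)
      ≤ (initSeg S (M N)).card / (initSeg R (M N)).card := by
    rcases Nat.eq_zero_or_pos (initSeg R (M N)).card with h0 | hpos
    · simp [Nat.le_zero.1 (h0 ▸ Finset.card_le_card (initSeg_mono hSR (M N)))]
    · exact div_le_div_of_nonneg_left (Nat.cast_nonneg _) (Nat.cast_pos.2 hpos)
        (by exact_mod_cast hR)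
  calc (relCount R S (N + 1) : ℝ) / ↑(N + 1)
      ≤ ((initSeg S (M N)).card + 1) / (N + 1) := by push_cast; gcongr; exact_mod_cast hS
    _ = (initSeg S (M N)).card / (N + 1) + 1 / (N + 1) := add_div _ _ _
    _ ≤ _ := add_le_add_left hdiv _

end Counting

theorem unbounded_density_forces_zero_mean_general (R : Set ℕ) (hR : IsGoodSet R)
    (α : ℝ)
    (μ : MeasureTheory.Measure UnitAddCircle) (hμ : IsLimitMeasure R α μ)
    (ρ : UnitAddCircle → ℝ) (hρ0 : 0 ≤ ρ) (hρint : MeasureTheory.Integrable ρ μ)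
    (hbound : ¬ MeasureTheory.MemLp ρ ⊤ μ)
    (S : Set ℕ) (hSR : S ⊆ R)
    (hrep : IsLimitMeasure S α (μ.withDensity fun x => ENNReal.ofReal (ρ x))) :
    Tendsto (fun N => (relCount R S N : ℝ) / N) atTop (𝓝 0) := by
  have := hμ.isProbabilityMeasure hR.1
  have := isFiniteMeasure_withDensity_ofReal (μ := μ) hρint.2
  refine tendsto_relCount_div_of_tendsto_card_div hR.1 hSR <| tendsto_order.2
    ⟨fun a ha => .of_forall fun M => ha.trans_le (by positivity), fun c hc => ?_⟩
  by_contra hfreq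
  simp_rw [not_eventually, not_lt] at hfreq
  lift c to ℝ≥0 using hc.le
  refine hbound <| memLp_top_of_withDensity_le_smul hρ0 hρint.1 (C := c⁻¹) <|
    Measure.le_smul_of_forall_integral_le fun f => ?_
  rw [NNReal.coe_inv, le_inv_mul_iff₀ hc]
  exact hrep.mul_integral_le_of_frequently hμ hSR hfreq ⟨fun x => f x, by fun_prop⟩
    fun x => (f x).2

/-- if an unbounded density `ρ` (with mean 1) is represented at an irrational `α`
by a good set `S ⊆ R`, then `S` has zero relative mean in `R`. -/
theorem unbounded_density_forces_zero_mean (R : Set ℕ) (hR : IsGoodSet R)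
    (α : ℝ) (hα : Irrational α)
    (μ : MeasureTheory.Measure UnitAddCircle) (hμ : IsLimitMeasure R α μ)
    (ρ : UnitAddCircle → ℝ) (hρ0 : 0 ≤ ρ) (hρint : MeasureTheory.Integrable ρ μ)
    (hρ1 : ∫ x, ρ x ∂μ = 1) (hbound : ¬ MeasureTheory.MemLp ρ ⊤ μ)
    (S : Set ℕ) (hSR : S ⊆ R) (hS : IsGoodSet S)
    (hrep : IsLimitMeasure S α (μ.withDensity fun x => ENNReal.ofReal (ρ x))) :
    Tendsto (fun N => (relCount R S N : ℝ) / N) atTop (𝓝 0) :=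
  unbounded_density_forces_zero_mean_general R hR α μ hμ ρ hρ0 hρint hbound S hSR hrep
end

section
/- Let R ⊆ ℕ be a good set with increasing enumeration (r_n), and let (S_k) be a sequence of good subsets of R each having a relative mean M_R(S_k), converging to S ⊆ R in the relative seminorm: lim_k limsup_N (1/N) #{n ≤ N : r_n ∈ S_k Δ S} = 0. Assume limsup_k M_R(S_k) > 0. Then: (1) lim_k M_R(S_k) exists, the relative mean M_R(S) exists, and M_R(S) = lim_k M_R(S_k) > 0; (2) S is a good set; (3) the limit measures converge in total variation uniformly in β: lim_k sup_{β∈ℝ} ‖μ_{S_k,β} − μ_{S,β}‖_var = 0. -/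
open MeasureTheory Filter Topology
open scoped BigOperators

/-!
Let `d_k` be the relative upper density of `S_k ∆ T` in `R`. Relative counts of two sets differ by
at most the count of their symmetric difference, so the means `M_R(S_k)` are Cauchy, and their
limit `c > 0` is also the relative mean of `T`.

Since `T` has positive relative density `c`, for large `N` the averages of a test function `g`
over `T(N)` and over `S_k(N)` differ by little more than `4 ‖g‖ d_k / c`, whatever the frequency.
Letting `N → ∞` bounds `|∫ g dμ_{S_k,β} - ∫ g dμ_{T,β}|` uniformly in `β`, and inner and outer regularity
together with Urysohn's lemma turn this into the same bound for every Borel set, i.e. for the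
variation distance.

For goodness of `T`, the averages over `T(N)` are uniformly approximated by the convergent averages
over `S_k(N)`, hence converge; their limit is the integral against any weak limit point of the
`μ_{S_k,α}`, which exists because the probability measures on the torus form a compact space.
-/

open scoped symmDiff

section RelativeCount

variable {R A : Set ℕ}

lemma relCount_le (R S : Set ℕ) (N : ℕ) : relCount R S N ≤ N := by
  classical
  exact (Finset.card_filter_le _ _).trans_eq (Finset.card_range N)

lemma relCount_le_relCount_add_relCount_symmDiff (R A B : Set ℕ) (N : ℕ) :
    relCount R A N ≤ relCount R B N + relCount R (A ∆ B) N := by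
  classical
  unfold relCount
  refine (Finset.card_le_card_sdiff_add_card
    (t := (Finset.range N).filter fun n => Nat.nth (· ∈ R) n ∈ B)).trans ?_
  rw [add_comm]
  gcongr
  intro n
  simp only [Finset.mem_sdiff, Finset.mem_filter, Set.mem_symmDiff]
  tauto

lemma abs_relCount_div_sub_relCount_div_le (R A B : Set ℕ) (N : ℕ) :
    |(relCount R A N : ℝ) / N - relCount R B N / N| ≤ relCount R (A ∆ B) N / N := by
  rw [← sub_div, abs_div, Nat.abs_cast]
  gcongr
  have hA : (relCount R A N : ℝ) ≤ relCount R B N + relCount R (A ∆ B) N := by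
    exact_mod_cast relCount_le_relCount_add_relCount_symmDiff R A B N
  have hB : (relCount R B N : ℝ) ≤ relCount R A N + relCount R (A ∆ B) N := by
    rw [symmDiff_comm]
    exact_mod_cast relCount_le_relCount_add_relCount_symmDiff R B A N
  rw [abs_sub_le_iff]
  constructor <;> linarith

lemma relCount_div_le_one (R S : Set ℕ) (N : ℕ) : (relCount R S N : ℝ) / N ≤ 1 :=
  div_le_one_of_le₀ (by exact_mod_cast relCount_le R S N) N.cast_nonneg

lemma eventually_eventually_relCount_div_lt {A : ℕ → Set ℕ}
    (h : Tendsto (fun k => limsup (fun N => (relCount R (A k) N : ℝ) / N) atTop) atTop (𝓝 0))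
    {ε : ℝ} (hε : 0 < ε) : ∀ᶠ k in atTop, ∀ᶠ N in atTop, (relCount R (A k) N : ℝ) / N < ε :=
  (h.eventually (gt_mem_nhds hε)).mono fun _ hk =>
    eventually_lt_of_limsup_lt hk (isBoundedUnder_of ⟨1, relCount_div_le_one R _⟩)

lemma infinite_of_tendsto_relCount_div (hR : R.Infinite) {x : ℝ} (hx : 0 < x)
    (h : Tendsto (fun N => (relCount R A N : ℝ) / N) atTop (𝓝 x)) : A.Infinite := by
  classical
  intro hA
  have hbdd : ∀ N, relCount R A N ≤ hA.toFinset.card := fun N =>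
    Finset.card_le_card_of_injOn (Nat.nth (· ∈ R))
      (fun n hn => by simpa using (Finset.mem_filter.1 hn).2) (Nat.nth_injective hR).injOn
  have h0 : Tendsto (fun N => (relCount R A N : ℝ) / N) atTop (𝓝 0) :=
    squeeze_zero (fun N => by positivity)
      (fun N => div_le_div_of_nonneg_right (Nat.cast_le.2 (hbdd N)) N.cast_nonneg)
      (tendsto_const_div_atTop_nhds_zero_nat _)
  exact hx.ne' (tendsto_nhds_unique h h0)

end RelativeCount

lemma exists_tendsto_of_forall_eventually_abs_sub_le {u : ℕ → ℝ} {v : ℕ → ℕ → ℝ} {a : ℕ → ℝ}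
    (hv : ∀ k, Tendsto (v k) atTop (𝓝 (a k)))
    (huv : ∀ ε > 0, ∀ᶠ k in atTop, ∀ᶠ N in atTop, |u N - v k N| ≤ ε) :
    ∃ L, Tendsto a atTop (𝓝 L) ∧ Tendsto u atTop (𝓝 L) := by
  have ha : CauchySeq a := by
    refine Metric.cauchySeq_iff.2 fun ε hε => ?_
    obtain ⟨K, hK⟩ := eventually_atTop.1 (huv (ε / 3) (by positivity))
    refine ⟨K, fun k hk j hj => ?_⟩
    have hkj : |a k - a j| ≤ ε / 3 + ε / 3 := by
      refine le_of_tendsto ((hv k).sub (hv j)).abs ?_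
      filter_upwards [hK k hk, hK j hj] with N hNk hNj
      calc |v k N - v j N| = |(u N - v j N) - (u N - v k N)| := by ring_nf
        _ ≤ |u N - v j N| + |u N - v k N| := abs_sub _ _
        _ ≤ ε / 3 + ε / 3 := by linarith
    rw [Real.dist_eq]
    linarith
  obtain ⟨L, haL⟩ := cauchySeq_tendsto_of_complete ha
  refine ⟨L, haL, Metric.tendsto_nhds.2 fun ε hε => ?_⟩
  obtain ⟨k, hkL, hku⟩ :=
    ((Metric.tendsto_nhds.1 haL (ε / 3) (by positivity)).and (huv (ε / 3) (by positivity))).exists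
  filter_upwards [hku, Metric.tendsto_nhds.1 (hv k) (ε / 3) (by positivity)] with N hN hvN
  rw [Real.dist_eq] at hkL hvN ⊢
  linarith [abs_sub_le (u N) (v k N) L, abs_sub_le (v k N) (a k) L]

section InitialSegments

/- `relCount R S (countUpTo R N)` counts `S ∩ [0, N]`, whereas `initSeg S N` omits `0`. -/
open Classical in
noncomputable def countUpTo (R : Set ℕ) (N : ℕ) : ℕ := Nat.count (· ∈ R) (N + 1)

variable {R S : Set ℕ}

open Classical in
lemma relCount_countUpTo (hR : R.Infinite) (hS : S ⊆ R) (N : ℕ) :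
    relCount R S (countUpTo R N) = Nat.count (· ∈ S) (N + 1) := by
  rw [Nat.count_eq_card_filter_range]
  unfold relCount countUpTo
  refine Finset.card_bij' (fun n _ => Nat.nth (· ∈ R) n) (fun s _ => Nat.count (· ∈ R) s)
    (fun n hn => ?_) (fun s hs => ?_) (fun n _ => Nat.count_nth_of_infinite (p := (· ∈ R)) hR n)
    (fun s hs => Nat.nth_count (hS (Finset.mem_filter.1 hs).2))
  · simp only [Finset.mem_filter, Finset.mem_range] at hn ⊢
    exact ⟨Nat.nth_lt_of_lt_count hn.1, hn.2⟩
  · simp only [Finset.mem_filter, Finset.mem_range] at hs ⊢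
    exact ⟨Nat.count_strict_mono (hS hs.2) hs.1, by rw [Nat.nth_count (hS hs.2)]; exact hs.2⟩

lemma card_initSeg_le_relCount_countUpTo (hR : R.Infinite) (hS : S ⊆ R) (N : ℕ) :
    (initSeg S N).card ≤ relCount R S (countUpTo R N) := by
  classical
  rw [relCount_countUpTo hR hS, Nat.count_eq_card_filter_range]
  refine Finset.card_le_card fun s hs => ?_
  simp only [initSeg, Finset.mem_filter, Finset.mem_Icc, Finset.mem_range] at hs ⊢
  exact ⟨by omega, hs.2⟩

lemma relCount_countUpTo_le_card_initSeg_add_one (hR : R.Infinite) (hS : S ⊆ R) (N : ℕ) :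
    relCount R S (countUpTo R N) ≤ (initSeg S N).card + 1 := by
  classical
  rw [relCount_countUpTo hR hS, Nat.count_eq_card_filter_range]
  refine (Finset.card_le_card fun s hs => ?_).trans (Finset.card_insert_le 0 (initSeg S N))
  simp only [initSeg, Finset.mem_filter, Finset.mem_Icc, Finset.mem_range,
    Finset.mem_insert] at hs ⊢
  rcases Nat.eq_zero_or_pos s with rfl | hpos
  · exact Or.inl rfl
  · exact Or.inr ⟨⟨hpos, by omega⟩, hs.2⟩

lemma tendsto_countUpTo (hR : R.Infinite) : Tendsto (countUpTo R) atTop atTop := by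
  classical
  refine tendsto_atTop_atTop_of_monotone (fun a b hab => Nat.count_monotone _ (by omega))
    fun n => ⟨Nat.nth (· ∈ R) n, ?_⟩
  rw [countUpTo, Nat.count_nth_succ_of_infinite (p := (· ∈ R)) hR]
  omega

lemma tendsto_card_initSeg_div_countUpTo (hR : R.Infinite) (hS : S ⊆ R) {x : ℝ}
    (h : Tendsto (fun N => (relCount R S N : ℝ) / N) atTop (𝓝 x)) :
    Tendsto (fun N => ((initSeg S N).card : ℝ) / countUpTo R N) atTop (𝓝 x) := by
  have hu := h.comp (tendsto_countUpTo hR)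
  have hl : Tendsto (fun N => (relCount R S (countUpTo R N) : ℝ) / countUpTo R N
      - (countUpTo R N : ℝ)⁻¹) atTop (𝓝 x) := by
    simpa using hu.sub (tendsto_inv_atTop_zero.comp
      (tendsto_natCast_atTop_atTop.comp (tendsto_countUpTo hR)))
  refine tendsto_of_tendsto_of_tendsto_of_le_of_le hl hu (fun N => ?_) (fun N => ?_)
  · have h1 : (relCount R S (countUpTo R N) : ℝ) ≤ (initSeg S N).card + 1 := by
      exact_mod_cast relCount_countUpTo_le_card_initSeg_add_one hR hS N
    rw [inv_eq_one_div, div_sub_div_same]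
    exact div_le_div_of_nonneg_right (by linarith) (Nat.cast_nonneg _)
  · exact div_le_div_of_nonneg_right
      (Nat.cast_le.2 (card_initSeg_le_relCount_countUpTo hR hS N)) (Nat.cast_nonneg _)

lemma eventually_card_initSeg_div_countUpTo_le (hR : R.Infinite) (hS : S ⊆ R) {δ : ℝ}
    (h : ∀ᶠ M in atTop, (relCount R S M : ℝ) / M ≤ δ) :
    ∀ᶠ N in atTop, ((initSeg S N).card : ℝ) / countUpTo R N ≤ δ :=
  (tendsto_countUpTo hR).eventually h |>.mono fun N hN =>
    (div_le_div_of_nonneg_right (Nat.cast_le.2 (card_initSeg_le_relCount_countUpTo hR hS N))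
      (Nat.cast_nonneg _)).trans hN

end InitialSegments

section EmpiricalAverages

variable {S A B : Set ℕ} {α G : ℝ} {g : UnitAddCircle → ℝ} {N : ℕ}

lemma card_mul_empAvg (S : Set ℕ) (α : ℝ) (N : ℕ) (g : UnitAddCircle → ℝ) :
    ((initSeg S N).card : ℝ) * empAvg S α N g = ∑ s ∈ initSeg S N, g ((s : ℝ) * α) := by
  unfold empAvg
  rcases eq_or_ne (initSeg S N).card 0 with h | h
  · simp [Finset.card_eq_zero.1 h]
  · rw [mul_inv_cancel_left₀ (Nat.cast_ne_zero.2 h)]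

lemma abs_empAvg_le (hg : ∀ x, |g x| ≤ G) : |empAvg S α N g| ≤ G := by
  have hG : 0 ≤ G := (abs_nonneg _).trans (hg 0)
  rcases eq_or_ne (initSeg S N).card 0 with h | h
  · simp [empAvg, h, hG]
  · have hpos : (0 : ℝ) < (initSeg S N).card := by positivity
    rw [← mul_le_mul_iff_right₀ hpos, ← abs_of_pos hpos, ← abs_mul, card_mul_empAvg,
      abs_of_pos hpos]
    refine (Finset.abs_sum_le_sum_abs _ _).trans ?_
    simpa [mul_comm] using Finset.sum_le_sum fun s (_ : s ∈ initSeg S N) => hg ((s : ℝ) * α)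

lemma initSeg_symmDiff (A B : Set ℕ) (N : ℕ) :
    initSeg (A ∆ B) N = (initSeg A N \ initSeg B N) ∪ (initSeg B N \ initSeg A N) := by
  ext s
  simp only [initSeg, Finset.mem_union, Finset.mem_sdiff, Finset.mem_filter, Set.mem_symmDiff]
  tauto

lemma abs_empAvg_sub_empAvg_le (hg : ∀ x, |g x| ≤ G) (hA : (initSeg A N).Nonempty) :
    |empAvg A α N g - empAvg B α N g|
      ≤ 2 * G * (initSeg (A ∆ B) N).card / (initSeg A N).card := by
  set e := empAvg B α N g
  set h : ℕ → ℝ := fun s => g ((s : ℝ) * α) - e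
  -- Centering at `e` makes the sum over `B(N)` vanish, so only `A(N) ∆ B(N)` contributes.
  have hsum : ∀ S : Set ℕ,
      ∑ s ∈ initSeg S N, h s = (initSeg S N).card * (empAvg S α N g - e) := fun S => by
    rw [mul_sub, card_mul_empAvg, Finset.sum_sub_distrib, Finset.sum_const, nsmul_eq_mul]
  have hh : ∀ s, |h s| ≤ 2 * G := fun s => (abs_sub _ _).trans
    (by linarith [hg ((s : ℝ) * α), abs_empAvg_le (S := B) (α := α) (N := N) hg])
  have hpos : (0 : ℝ) < (initSeg A N).card := by exact_mod_cast hA.card_pos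
  have key : |∑ s ∈ initSeg A N, h s - ∑ s ∈ initSeg B N, h s|
      ≤ 2 * G * (initSeg (A ∆ B) N).card := by
    rw [← Finset.sum_sdiff_sub_sum_sdiff]
    refine (abs_sub _ _).trans ?_
    calc |∑ s ∈ initSeg A N \ initSeg B N, h s| + |∑ s ∈ initSeg B N \ initSeg A N, h s|
        ≤ ∑ s ∈ initSeg A N \ initSeg B N, |h s| + ∑ s ∈ initSeg B N \ initSeg A N, |h s| :=
          add_le_add (Finset.abs_sum_le_sum_abs _ _) (Finset.abs_sum_le_sum_abs _ _)
      _ = ∑ s ∈ initSeg (A ∆ B) N, |h s| := by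
          rw [initSeg_symmDiff, Finset.sum_union disjoint_sdiff_sdiff]
      _ ≤ 2 * G * (initSeg (A ∆ B) N).card := by
          simpa [mul_comm] using Finset.sum_le_sum fun s (_ : s ∈ initSeg (A ∆ B) N) => hh s
  rw [hsum A, hsum B, sub_self, mul_zero, sub_zero, abs_mul, abs_of_pos hpos] at key
  rw [le_div_iff₀ hpos, mul_comm]
  exact key

end EmpiricalAverages

section Approximation

variable {R A B T : Set ℕ} {G : ℝ}

lemma eventually_abs_empAvg_sub_empAvg_le (hR : R.Infinite) (hA : A ⊆ R) (hB : B ⊆ R)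
    {x δ : ℝ} (hx : 0 < x) (hAx : Tendsto (fun N => (relCount R A N : ℝ) / N) atTop (𝓝 x))
    (hAB : ∀ᶠ N in atTop, (relCount R (A ∆ B) N : ℝ) / N ≤ δ)
    {g : UnitAddCircle → ℝ} (hg : ∀ y, |g y| ≤ G) (α : ℝ) :
    ∀ᶠ N in atTop, |empAvg A α N g - empAvg B α N g| ≤ 4 * G * δ / x := by
  have hG : 0 ≤ G := (abs_nonneg _).trans (hg 0)
  have hABR : A ∆ B ⊆ R := Set.symmDiff_subset_union.trans (Set.union_subset hA hB)
  filter_upwards [(tendsto_card_initSeg_div_countUpTo hR hA hAx).eventually_const_le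
      (half_lt_self hx), eventually_card_initSeg_div_countUpTo_le hR hABR hAB,
    (tendsto_countUpTo hR).eventually_gt_atTop 0] with N hAN hABN hN
  have hM : (0 : ℝ) < countUpTo R N := by exact_mod_cast hN
  rw [le_div_iff₀ hM] at hAN
  rw [div_le_iff₀ hM] at hABN
  have hApos : (0 : ℝ) < (initSeg A N).card := by nlinarith
  have hδ : 0 ≤ δ := nonneg_of_mul_nonneg_left ((Nat.cast_nonneg _).trans hABN) hM
  refine (abs_empAvg_sub_empAvg_le hg (Finset.card_pos.1 (by exact_mod_cast hApos))).trans ?_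
  calc 2 * G * (initSeg (A ∆ B) N).card / (initSeg A N).card
      ≤ 2 * G * (δ * countUpTo R N) / (x / 2 * countUpTo R N) := by gcongr
    _ = 4 * G * δ / x := by field_simp; ring

lemma eventually_forall_abs_empAvg_sub_empAvg_le (hR : R.Infinite) (hT : T ⊆ R)
    {S : ℕ → Set ℕ} (hS : ∀ k, S k ⊆ R) {c : ℝ} (hc : 0 < c)
    (hTc : Tendsto (fun N => (relCount R T N : ℝ) / N) atTop (𝓝 c))
    (hST : ∀ ε > 0, ∀ᶠ k in atTop, ∀ᶠ N in atTop, (relCount R (S k ∆ T) N : ℝ) / N < ε)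
    {ε : ℝ} (hε : 0 < ε) :
    ∀ᶠ k in atTop, ∀ (α : ℝ) (g : UnitAddCircle → ℝ), (∀ y, |g y| ≤ G) →
      ∀ᶠ N in atTop, |empAvg T α N g - empAvg (S k) α N g| ≤ ε := by
  have hδ : 0 < ε * c / (4 * (|G| + 1)) := by positivity
  filter_upwards [hST _ hδ] with k hk α g hg
  refine (eventually_abs_empAvg_sub_empAvg_le hR hT (hS k) hc hTc
    (hk.mono fun N hN => by rw [symmDiff_comm]; exact hN.le) hg α).mono fun N hN => hN.trans ?_
  rw [div_le_iff₀ hc]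
  calc 4 * G * (ε * c / (4 * (|G| + 1))) = G / (|G| + 1) * (ε * c) := by field_simp
    _ ≤ 1 * (ε * c) := by
        gcongr
        exact (div_le_one (by positivity)).2 ((le_abs_self G).trans (lt_add_one _).le)
    _ = ε * c := one_mul _

end Approximation

section TotalVariation

variable {X : Type*} [TopologicalSpace X] [TopologicalSpace.PseudoMetrizableSpace X]
  [MeasurableSpace X] [BorelSpace X] {μ ν : Measure X} [IsFiniteMeasure μ] [IsFiniteMeasure ν]
  {ε : ℝ}

lemma measureReal_le_add_of_forall_integral_le
    (h : ∀ g : C(X, ℝ), (∀ x, g x ∈ Set.Icc (0 : ℝ) 1) → ∫ x, g x ∂μ ≤ ∫ x, g x ∂ν + ε)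
    {B : Set X} (hB : MeasurableSet B) : μ.real B ≤ ν.real B + ε := by
  refine le_of_forall_pos_le_add fun η hη => ?_
  have hη' : ENNReal.ofReal (η / 2) ≠ 0 := (ENNReal.ofReal_pos.2 (half_pos hη)).ne'
  obtain ⟨K, hKB, hK, hμK⟩ := hB.exists_isClosed_sdiff_lt (μ := μ) (measure_ne_top μ B) hη'
  obtain ⟨U, hBU, hU, -, hνU⟩ := hB.exists_isOpen_sdiff_lt (μ := ν) (measure_ne_top ν B) hη'
  obtain ⟨f, hf0, hf1, hf01⟩ := exists_continuous_zero_one_of_isClosed hU.isClosed_compl hK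
    (Set.disjoint_compl_left_iff_subset.2 (hKB.trans hBU))
  have hf : ∀ (m : Measure X) [IsFiniteMeasure m], Integrable f m := fun m _ =>
    .of_bound f.continuous.aestronglyMeasurable 1
      (ae_of_all _ fun x => by simpa [abs_le] using ⟨(hf01 x).1.trans' (by norm_num), (hf01 x).2⟩)
  have hμf : μ.real K ≤ ∫ x, f x ∂μ := by
    rw [← integral_indicator_one hK.measurableSet]
    refine integral_mono ((integrable_const 1).indicator hK.measurableSet) (hf μ) fun x => ?_
    by_cases hx : x ∈ K
    · simp [hx, hf1 hx]
    · simp [hx, (hf01 x).1]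
  have hνf : ∫ x, f x ∂ν ≤ ν.real U := by
    rw [← integral_indicator_one hU.measurableSet]
    refine integral_mono (hf ν) ((integrable_const 1).indicator hU.measurableSet) fun x => ?_
    by_cases hx : x ∈ U
    · simp [hx, (hf01 x).2]
    · simp [hx, hf0 hx]
  have hμBK := ENNReal.toReal_lt_of_lt_ofReal hμK
  have hνUB := ENNReal.toReal_lt_of_lt_ofReal hνU
  rw [← measureReal_def, measureReal_sdiff hKB hK.measurableSet] at hμBK
  rw [← measureReal_def, measureReal_sdiff hBU hB] at hνUB
  linarith [h f hf01]

lemma abs_measureReal_sub_le_of_forall_abs_integral_sub_le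
    (h : ∀ g : C(X, ℝ), (∀ x, g x ∈ Set.Icc (0 : ℝ) 1) → |∫ x, g x ∂μ - ∫ x, g x ∂ν| ≤ ε)
    {B : Set X} (hB : MeasurableSet B) : |μ.real B - ν.real B| ≤ ε := by
  have hμν := measureReal_le_add_of_forall_integral_le (μ := μ) (ν := ν)
    (fun g hg => by linarith [(abs_le.1 (h g hg)).2]) hB
  have hνμ := measureReal_le_add_of_forall_integral_le (μ := ν) (ν := μ)
    (fun g hg => by linarith [(abs_le.1 (h g hg)).1]) hB
  exact abs_sub_le_iff.2 ⟨by linarith, by linarith⟩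

end TotalVariation

lemma varDist_nonneg (μ ν : Measure UnitAddCircle) : 0 ≤ varDist μ ν :=
  Real.iSup_nonneg fun _ => Real.iSup_nonneg fun _ => abs_nonneg _

lemma varDist_le {μ ν : Measure UnitAddCircle} {ε : ℝ} (hε : 0 ≤ ε)
    (h : ∀ B, MeasurableSet B → |μ.real B - ν.real B| ≤ ε) : varDist μ ν ≤ ε :=
  Real.iSup_le (fun B => Real.iSup_le (h B) hε) hε

section LimitMeasures

variable {S T : Set ℕ} {α : ℝ} {μ ν : Measure UnitAddCircle}

lemma isProbabilityMeasure_of_isLimitMeasure (hS : S.Infinite) (h : IsLimitMeasure S α μ) :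
    IsProbabilityMeasure μ := by
  obtain ⟨s, hsS, hs⟩ := hS.exists_gt 0
  have hone : ∀ᶠ N in atTop, empAvg S α N (fun _ => 1) = 1 := by
    filter_upwards [eventually_ge_atTop s] with N hN
    have hpos : (initSeg S N).Nonempty :=
      ⟨s, by simp only [initSeg, Finset.mem_filter, Finset.mem_Icc]; exact ⟨⟨hs, hN⟩, hsS⟩⟩
    simp [empAvg, hpos.card_pos.ne']
  have hμ : ∫ _, (1 : ℝ) ∂μ = 1 :=
    tendsto_nhds_unique ((h (ContinuousMap.const _ 1)).congr' hone) tendsto_const_nhds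
  rw [integral_const, smul_eq_mul, mul_one] at hμ
  exact ⟨(ENNReal.toReal_eq_one_iff _).1 hμ⟩

lemma varDist_le_of_eventually_abs_empAvg_sub_le (hS : S.Infinite) (hT : T.Infinite)
    (hμ : IsLimitMeasure S α μ) (hν : IsLimitMeasure T α ν) {ε : ℝ} (hε : 0 ≤ ε)
    (h : ∀ g : UnitAddCircle → ℝ, (∀ x, |g x| ≤ 1) →
      ∀ᶠ N in atTop, |empAvg T α N g - empAvg S α N g| ≤ ε) :
    varDist μ ν ≤ ε := by
  have := isProbabilityMeasure_of_isLimitMeasure hS hμ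
  have := isProbabilityMeasure_of_isLimitMeasure hT hν
  refine varDist_le hε fun B hB => abs_measureReal_sub_le_of_forall_abs_integral_sub_le
    (fun g hg => ?_) hB
  rw [abs_sub_comm]
  refine le_of_tendsto ((hν g).sub (hμ g)).abs (h g fun x => abs_le.2 ⟨?_, (hg x).2⟩)
  linarith [(hg x).1]

lemma exists_isLimitMeasure_of_approx {S : ℕ → Set ℕ}
    (hS : ∀ k, ∃ μ, IsProbabilityMeasure μ ∧ IsLimitMeasure (S k) α μ)
    (hST : ∀ g : C(UnitAddCircle, ℝ), ∀ ε > 0,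
      ∀ᶠ k in atTop, ∀ᶠ N in atTop, |empAvg T α N g - empAvg (S k) α N g| ≤ ε) :
    ∃ μ, IsProbabilityMeasure μ ∧ IsLimitMeasure T α μ := by
  choose μ hμ hlim using hS
  obtain ⟨ν, φ, hφ, hν⟩ :=
    CompactSpace.tendsto_subseq (X := ProbabilityMeasure UnitAddCircle) fun k => ⟨μ k, hμ k⟩
  refine ⟨ν, inferInstance, fun g => ?_⟩
  obtain ⟨L, hL, hT⟩ := exists_tendsto_of_forall_eventually_abs_sub_le (fun k => hlim k g) (hST g)
  have hνg := ProbabilityMeasure.tendsto_iff_forall_integral_tendsto.1 hν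
    (BoundedContinuousFunction.mkOfCompact g)
  simp only [BoundedContinuousFunction.mkOfCompact_apply] at hνg
  rwa [tendsto_nhds_unique hνg (hL.comp hφ.tendsto_atTop)]

end LimitMeasures

/-- a `‖·‖₁`-convergent sequence of good subsets of `R` with means, with
positive limsup of means, has a good limit set; the means converge to the mean of the limit,
and the limit measures converge in total variation uniformly in `β`. -/
theorem limit_of_good_sets (R : Set ℕ) (hR : IsGoodSet R)
    (S : ℕ → Set ℕ) (hSR : ∀ k, S k ⊆ R) (hSgood : ∀ k, IsGoodSet (S k))
    (m : ℕ → ℝ)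
    (hm : ∀ k, Tendsto (fun N => (relCount R (S k) N : ℝ) / N) atTop (𝓝 (m k)))
    (T : Set ℕ) (hTR : T ⊆ R)
    (hconv : Tendsto
      (fun k => Filter.limsup (fun N => (relCount R (symmDiff (S k) T) N : ℝ) / N) atTop)
      atTop (𝓝 0))
    (hpos : 0 < Filter.limsup m atTop) :
    (∃ c : ℝ, 0 < c ∧ Tendsto m atTop (𝓝 c) ∧
        Tendsto (fun N => (relCount R T N : ℝ) / N) atTop (𝓝 c)) ∧
    IsGoodSet T ∧
    ∀ μk : ℕ → ℝ → MeasureTheory.Measure UnitAddCircle,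
      ∀ μT : ℝ → MeasureTheory.Measure UnitAddCircle,
        (∀ k β, IsLimitMeasure (S k) β (μk k β)) →
        (∀ β, IsLimitMeasure T β (μT β)) →
        Tendsto (fun k => ⨆ β : ℝ, varDist (μk k β) (μT β)) atTop (𝓝 0) := by
  have hST := fun ε (hε : 0 < ε) => eventually_eventually_relCount_div_lt hconv hε
  obtain ⟨c, hmc, hTc⟩ := exists_tendsto_of_forall_eventually_abs_sub_le hm fun ε hε =>
    (hST ε hε).mono fun k hk => hk.mono fun N hN =>
      (abs_relCount_div_sub_relCount_div_le R T (S k) N).trans (symmDiff_comm T (S k) ▸ hN.le)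
  have hc : 0 < c := hmc.limsup_eq ▸ hpos
  have hT : T.Infinite := infinite_of_tendsto_relCount_div hR.1 hc hTc
  have happrox := fun G ε (hε : 0 < ε) =>
    eventually_forall_abs_empAvg_sub_empAvg_le (G := G) hR.1 hTR hSR hc hTc hST hε
  refine ⟨⟨c, hc, hmc, hTc⟩, ⟨hT, fun α => exists_isLimitMeasure_of_approx
    (fun k => (hSgood k).2 α) fun g ε hε => (happrox ‖g‖ ε hε).mono fun k hk =>
      hk α g fun x => by simpa using g.norm_coe_le_norm x⟩, fun μk μT hμk hμT => ?_⟩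
  refine tendsto_order.2 ⟨fun a ha => .of_forall fun k =>
    ha.trans_le (Real.iSup_nonneg fun β => varDist_nonneg _ _), fun a ha => ?_⟩
  filter_upwards [happrox 1 (a / 2) (half_pos ha)] with k hk
  refine (Real.iSup_le (fun β => ?_) (half_pos ha).le).trans_lt (half_lt_self ha)
  exact varDist_le_of_eventually_abs_empAvg_sub_le (hSgood k).1 hT (hμk k β) (hμT β)
    (half_pos ha).le (hk β)
end

section
/- Let (w_k) be a sequence of nonnegative sequences ℕ → ℝ that is Cauchy with respect to the seminorm ‖·‖₁, i.e. lim_k sup_{l≥k} ‖w_l − w_k‖₁ = 0. Then there exists a nonnegative sequence w : ℕ → ℝ with lim_k ‖w_k − w‖₁ = 0; and if moreover sup_k sup_n w_k(n) < ∞, then w can be chosen with sup_n w(n) ≤ sup_k sup_n w_k(n). -/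
open MeasureTheory Filter Topology
open scoped BigOperators

/-!
Pass to a subsequence `w (φ j)` with `‖w (φ (j+1)) - w (φ j)‖₁ < 2⁻ʲ` and glue it diagonally:
choose thresholds `s 0 < s 1 < ⋯` so that the Cesàro averages of `|w (φ (j+1)) - w (φ j)|` up
to `N` are below `2⁻ʲ` once `N ≥ s (j+1)`, and let `v n = w (φ j) n` for `s j ≤ n < s (j+1)`.
Telescoping then bounds the averages of `|w (φ m) - v|` by `3·2⁻ᵐ` for large `N`. Since `v`
takes its values among those of the `w k`, it inherits nonnegativity and any uniform bound.

In Mathlib the `limsup` of an unbounded real sequence is `0`, so `besic f = 0` whenever the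
averages of `|f|` are unbounded: the triangle inequality for `besic` needs a boundedness
hypothesis, and when the averages of `|w k|` are eventually unbounded, `v = 0` works.
-/

open Finset

noncomputable def absAvg (f : ℕ → ℝ) (N : ℕ) : ℝ := (∑ n ∈ range N, |f n|) / N

section absAvg

variable {f g h : ℕ → ℝ}

lemma absAvg_nonneg (f : ℕ → ℝ) (N : ℕ) : 0 ≤ absAvg f N := by
  unfold absAvg; positivity

lemma sum_range_abs_eq_absAvg_mul (f : ℕ → ℝ) (N : ℕ) :
    ∑ n ∈ range N, |f n| = absAvg f N * N := by
  rcases eq_or_ne N 0 with rfl | hN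
  · simp
  · rw [absAvg, div_mul_cancel₀ _ (Nat.cast_ne_zero.2 hN)]

lemma absAvg_le_add_of_abs_le (hfgh : ∀ n, |f n| ≤ |g n| + |h n|) (N : ℕ) :
    absAvg f N ≤ absAvg g N + absAvg h N := by
  unfold absAvg
  rw [← add_div, ← sum_add_distrib]
  gcongr with n
  exact hfgh n

lemma isBoundedUnder_absAvg_of_abs_le_add (hfgh : ∀ n, |f n| ≤ |g n| + |h n|)
    (hg : IsBoundedUnder (· ≤ ·) atTop (absAvg g))
    (hh : IsBoundedUnder (· ≤ ·) atTop (absAvg h)) :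
    IsBoundedUnder (· ≤ ·) atTop (absAvg f) :=
  (isBoundedUnder_le_add hg hh).mono_le (Eventually.of_forall (absAvg_le_add_of_abs_le hfgh))

lemma isBoundedUnder_absAvg_sub (hf : IsBoundedUnder (· ≤ ·) atTop (absAvg f))
    (hg : IsBoundedUnder (· ≤ ·) atTop (absAvg g)) :
    IsBoundedUnder (· ≤ ·) atTop (absAvg fun n => f n - g n) :=
  isBoundedUnder_absAvg_of_abs_le_add (fun n => abs_sub (f n) (g n)) hf hg

lemma isBoundedUnder_absAvg_of_abs_le {C : ℝ} (hC : ∀ n, |f n| ≤ C) :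
    IsBoundedUnder (· ≤ ·) atTop (absAvg f) := by
  refine isBoundedUnder_of_eventually_le (a := C) ?_
  filter_upwards [eventually_ge_atTop 1] with N hN
  have hN0 : (0 : ℝ) < N := by exact_mod_cast hN
  rw [absAvg, div_le_iff₀ hN0]
  calc ∑ n ∈ range N, |f n| ≤ ∑ _n ∈ range N, C := sum_le_sum fun n _ => hC n
    _ = C * N := by rw [sum_const, card_range, nsmul_eq_mul, mul_comm]

lemma eventually_absAvg_le_of_sum_Ico_le (a : ℕ) {c ε : ℝ}
    (h : ∀ N, ∑ n ∈ Ico a N, |f n| ≤ c * N) (hε : 0 < ε) :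
    ∀ᶠ N in atTop, absAvg f N ≤ c + ε := by
  filter_upwards [eventually_ge_atTop (max a 1),
    (tendsto_const_div_atTop_nhds_zero_nat (∑ n ∈ range a, |f n|)).eventually (gt_mem_nhds hε)]
    with N hN hsmall
  have hN0 : (0 : ℝ) < N := by exact_mod_cast (le_of_max_le_right hN)
  have htail : (∑ n ∈ Ico a N, |f n|) / N ≤ c := (div_le_iff₀ hN0).2 (h N)
  rw [absAvg, ← sum_range_add_sum_Ico _ (le_of_max_le_left hN), add_div]
  linarith

lemma sum_Ico_abs_le_of_absAvg_le {a T : ℕ} {c : ℝ} (hc : 0 ≤ c)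
    (hT : ∀ N ≥ T, absAvg f N ≤ c) (ha : T ≤ a) (M : ℕ) :
    ∑ n ∈ Ico a M, |f n| ≤ c * M := by
  rcases le_or_gt T M with hM | hM
  · calc ∑ n ∈ Ico a M, |f n| ≤ ∑ n ∈ range M, |f n| :=
          sum_le_sum_of_subset_of_nonneg (range_eq_Ico M ▸ Ico_subset_Ico_left (Nat.zero_le a))
            fun _ _ _ => abs_nonneg _
      _ = absAvg f M * M := sum_range_abs_eq_absAvg_mul f M
      _ ≤ c * M := by gcongr; exact hT M hM
  · rw [Ico_eq_empty_of_le (hM.le.trans ha), sum_empty]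
    positivity

end absAvg

section besic

variable {f g h : ℕ → ℝ}

lemma besic_eq_limsup_absAvg (f : ℕ → ℝ) : besic f = limsup (absAvg f) atTop := rfl

lemma isCoboundedUnder_absAvg (f : ℕ → ℝ) : IsCoboundedUnder (· ≤ ·) atTop (absAvg f) :=
  isCoboundedUnder_le_of_le atTop (absAvg_nonneg f)

lemma besic_eq_zero_of_not_isBoundedUnder (hf : ¬ IsBoundedUnder (· ≤ ·) atTop (absAvg f)) :
    besic f = 0 := by
  rw [besic_eq_limsup_absAvg, limsup_eq, ← Real.sInf_empty]
  congr
  exact Set.eq_empty_of_forall_notMem fun a ha => hf ⟨a, ha⟩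

lemma besic_nonneg (f : ℕ → ℝ) : 0 ≤ besic f := by
  by_cases hf : IsBoundedUnder (· ≤ ·) atTop (absAvg f)
  · exact le_limsup_of_frequently_le (Frequently.of_forall (absAvg_nonneg f)) hf
  · rw [besic_eq_zero_of_not_isBoundedUnder hf]

lemma besic_le_of_eventually_le {c : ℝ} (h : ∀ᶠ N in atTop, absAvg f N ≤ c) : besic f ≤ c :=
  limsup_le_of_le (isCoboundedUnder_absAvg f) h

lemma eventually_absAvg_lt_of_besic_lt {c : ℝ} (hf : IsBoundedUnder (· ≤ ·) atTop (absAvg f))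
    (h : besic f < c) : ∀ᶠ N in atTop, absAvg f N < c :=
  eventually_lt_of_limsup_lt h hf

lemma besic_sub_le_add (hgh : IsBoundedUnder (· ≤ ·) atTop (absAvg fun n => g n - h n)) :
    besic (fun n => f n - h n) ≤ besic (fun n => f n - g n) + besic (fun n => g n - h n) := by
  by_cases hfg : IsBoundedUnder (· ≤ ·) atTop (absAvg fun n => f n - g n)
  · calc besic (fun n => f n - h n)
        ≤ limsup (absAvg (fun n => f n - g n) + absAvg fun n => g n - h n) atTop :=
          limsup_le_limsup
            (Eventually.of_forall (absAvg_le_add_of_abs_le fun n => abs_sub_le _ _ _))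
            (isCoboundedUnder_absAvg _) (isBoundedUnder_le_add hfg hgh)
      _ ≤ besic (fun n => f n - g n) + besic (fun n => g n - h n) :=
          limsup_add_le (isBoundedUnder_of ⟨0, absAvg_nonneg _⟩) hfg
            (isCoboundedUnder_absAvg _) hgh
  · have hfh : ¬ IsBoundedUnder (· ≤ ·) atTop (absAvg fun n => f n - h n) := fun hfh =>
      hfg <| isBoundedUnder_absAvg_of_abs_le_add
        (fun n => by rw [abs_sub_comm (g n)]; exact abs_sub_le _ _ _) hfh hgh
    rw [besic_eq_zero_of_not_isBoundedUnder hfh]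
    exact add_nonneg (besic_nonneg _) (besic_nonneg _)

end besic

lemma exists_galoisConnection_of_strictMono {s : ℕ → ℕ} (hs : StrictMono s) (h0 : s 0 = 0) :
    ∃ J : ℕ → ℕ, GaloisConnection s J := by
  refine ⟨fun n => Nat.findGreatest (fun j => s j ≤ n) n, fun j n => ⟨fun h => ?_, fun h => ?_⟩⟩
  · exact Nat.le_findGreatest (hs.le_apply.trans h) h
  · exact (hs.monotone h).trans (Nat.findGreatest_spec (P := fun j => s j ≤ n) n.zero_le
      (h0.trans_le n.zero_le))

lemma sum_Ico_abs_sub_diag_le (u : ℕ → ℕ → ℝ) {s J : ℕ → ℕ} (hJ : GaloisConnection s J)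
    {M : ℕ} (c : ℕ → ℝ) (hc : ∀ p, ∑ n ∈ Ico (s (p + 1)) M, |u (p + 1) n - u p n| ≤ c p)
    (m : ℕ) : ∑ n ∈ Ico (s m) M, |u m n - u (J n) n| ≤ ∑ p ∈ Ico m (J M), c p := by
  calc ∑ n ∈ Ico (s m) M, |u m n - u (J n) n|
      ≤ ∑ n ∈ Ico (s m) M, ∑ p ∈ Ico m (J n), |u (p + 1) n - u p n| := by
        gcongr with n hn
        rw [abs_sub_comm, ← sum_Ico_sub (fun p => u p n) (hJ.le_iff_le.1 (mem_Ico.1 hn).1)]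
        exact abs_sum_le_sum_abs _ _
    _ = ∑ p ∈ Ico m (J M), ∑ n ∈ Ico (s (p + 1)) M, |u (p + 1) n - u p n| := by
        refine sum_comm' fun n p => ?_
        have h1 : s m ≤ n ↔ m ≤ J n := hJ.le_iff_le
        have h2 : s (p + 1) ≤ n ↔ p + 1 ≤ J n := hJ.le_iff_le
        have h3 : n ≤ M → J n ≤ J M := fun hn => hJ.monotone_u hn
        simp only [mem_Ico]
        constructor <;> intro <;> omega
    _ ≤ ∑ p ∈ Ico m (J M), c p := sum_le_sum fun p _ => hc p

theorem exists_diag_eventually_absAvg_le (u : ℕ → ℕ → ℝ)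
    (hu : ∀ p, ∀ᶠ N in atTop, absAvg (fun n => u (p + 1) n - u p n) N ≤ (2⁻¹ : ℝ) ^ p) :
    ∃ J : ℕ → ℕ, ∀ m, ∀ᶠ N in atTop,
      absAvg (fun n => u m n - u (J n) n) N ≤ 3 * (2⁻¹ : ℝ) ^ m := by
  choose T hT using fun p => eventually_atTop.1 (hu p)
  set s : ℕ → ℕ := fun j => j + ∑ p ∈ range j, T p with hs_def
  have hs : StrictMono s := strictMono_nat_of_lt_succ fun j => by
    simp only [hs_def, sum_range_succ]; omega
  have hsT : ∀ p, T p ≤ s (p + 1) := fun p => by simp only [hs_def, sum_range_succ]; omega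
  obtain ⟨J, hJ⟩ := exists_galoisConnection_of_strictMono hs (by simp [hs_def])
  refine ⟨J, fun m => ?_⟩
  have htail : ∀ M, ∑ n ∈ Ico (s m) M, |u m n - u (J n) n| ≤ 2 * (2⁻¹ : ℝ) ^ m * M := by
    intro M
    have hstep (p : ℕ) :
        ∑ n ∈ Ico (s (p + 1)) M, |u (p + 1) n - u p n| ≤ (2⁻¹ : ℝ) ^ p * M :=
      sum_Ico_abs_le_of_absAvg_le (by positivity) (hT p) (hsT p) M
    calc ∑ n ∈ Ico (s m) M, |u m n - u (J n) n|
        ≤ ∑ p ∈ Ico m (J M), (2⁻¹ : ℝ) ^ p * M := sum_Ico_abs_sub_diag_le u hJ _ hstep m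
      _ = (∑ p ∈ Ico m (J M), (2⁻¹ : ℝ) ^ p) * M := (sum_mul _ _ _).symm
      _ ≤ (2⁻¹ : ℝ) ^ m / (1 - 2⁻¹) * M := by
          gcongr; exact geom_sum_Ico_le_of_lt_one (by norm_num) (by norm_num)
      _ = 2 * (2⁻¹ : ℝ) ^ m * M := by ring
  filter_upwards [eventually_absAvg_le_of_sum_Ico_le (s m) htail
    (by positivity : (0 : ℝ) < (2⁻¹) ^ m)] with N hN
  linarith

theorem exists_diag_tendsto_besic (w : ℕ → ℕ → ℝ)
    (hcauchy : ∀ ε > (0 : ℝ), ∃ K, ∀ k ≥ K, ∀ l ≥ k, besic (fun n => w l n - w k n) < ε)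
    (hbdd : ∃ᶠ k in atTop, IsBoundedUnder (· ≤ ·) atTop (absAvg (w k))) :
    ∃ J : ℕ → ℕ, Tendsto (fun k => besic (fun n => w k n - w (J n) n)) atTop (𝓝 0) := by
  choose K hK using fun j : ℕ => hcauchy ((2⁻¹ : ℝ) ^ j) (by positivity)
  obtain ⟨φ, hφ, hφK⟩ : ∃ φ : ℕ → ℕ, StrictMono φ ∧
      ∀ j, IsBoundedUnder (· ≤ ·) atTop (absAvg (w (φ j))) ∧ K j ≤ φ j :=
    extraction_forall_of_frequently fun j => hbdd.and_eventually (eventually_ge_atTop (K j))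
  obtain ⟨J, hJ⟩ := exists_diag_eventually_absAvg_le (fun j => w (φ j)) fun p =>
    (eventually_absAvg_lt_of_besic_lt (isBoundedUnder_absAvg_sub (hφK (p + 1)).1 (hφK p).1)
      (hK p _ (hφK p).2 _ (hφ (lt_add_one p)).le)).mono fun _ => le_of_lt
  have hbound : ∀ m, ∀ k ≥ φ m,
      besic (fun n => w k n - w (φ (J n)) n) ≤ 4 * (2⁻¹ : ℝ) ^ m := fun m k hk =>
    calc besic (fun n => w k n - w (φ (J n)) n)
        ≤ besic (fun n => w k n - w (φ m) n) + besic (fun n => w (φ m) n - w (φ (J n)) n) :=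
          besic_sub_le_add (isBoundedUnder_of_eventually_le (hJ m))
      _ ≤ (2⁻¹ : ℝ) ^ m + 3 * (2⁻¹ : ℝ) ^ m :=
          add_le_add (hK m _ (hφK m).2 k hk).le (besic_le_of_eventually_le (hJ m))
      _ = 4 * (2⁻¹ : ℝ) ^ m := by ring
  refine ⟨φ ∘ J, tendsto_order.2 ⟨fun a ha => .of_forall fun k => ha.trans_le (besic_nonneg _),
    fun ε hε => ?_⟩⟩
  obtain ⟨m, hm⟩ := exists_pow_lt_of_lt_one (by positivity : 0 < ε / 4)
    (by norm_num : (2⁻¹ : ℝ) < 1)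
  filter_upwards [eventually_ge_atTop (φ m)] with k hk
  exact (hbound m k hk).trans_lt (by linarith)

/-- a Cauchy sequence of nonnegative sequences (weights) in the seminorm `‖·‖₁`
converges in `‖·‖₁` to a nonnegative sequence; a uniform bound can be preserved. -/
theorem cauchy_weights_converge (w : ℕ → ℕ → ℝ) (hnn : ∀ k n, 0 ≤ w k n)
    (hcauchy : ∀ ε > (0 : ℝ), ∃ K, ∀ k ≥ K, ∀ l ≥ k,
      besic (fun n => w l n - w k n) < ε) :
    (∃ v : ℕ → ℝ, (∀ n, 0 ≤ v n) ∧
        Tendsto (fun k => besic (fun n => w k n - v n)) atTop (𝓝 0)) ∧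
    ∀ C : ℝ, (∀ k n, w k n ≤ C) →
      ∃ v : ℕ → ℝ, (∀ n, 0 ≤ v n) ∧
        Tendsto (fun k => besic (fun n => w k n - v n)) atTop (𝓝 0) ∧
        ∀ n, v n ≤ C := by
  refine ⟨?_, fun C hC => ?_⟩
  · by_cases hbdd : ∃ᶠ k in atTop, IsBoundedUnder (· ≤ ·) atTop (absAvg (w k))
    · obtain ⟨J, hJ⟩ := exists_diag_tendsto_besic w hcauchy hbdd
      exact ⟨fun n => w (J n) n, fun n => hnn _ n, hJ⟩
    · refine ⟨0, fun _ => le_rfl, tendsto_const_nhds.congr' ?_⟩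
      filter_upwards [not_frequently.1 hbdd] with k hk
      simp only [Pi.zero_apply, sub_zero]
      exact (besic_eq_zero_of_not_isBoundedUnder hk).symm
  · have hbdd : ∃ᶠ k in atTop, IsBoundedUnder (· ≤ ·) atTop (absAvg (w k)) :=
      .of_forall fun k => isBoundedUnder_absAvg_of_abs_le fun n => by
        rw [abs_of_nonneg (hnn k n)]; exact hC k n
    obtain ⟨J, hJ⟩ := exists_diag_tendsto_besic w hcauchy hbdd
    exact ⟨fun n => w (J n) n, fun n => hnn _ n, hJ, fun n => hC _ n⟩
end
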